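/- Fix q ∈ ℤ and let X_q = {f ∈ C([0,1],ℝ) : f(0) = 0, f(1) = q} with the supremum metric. Define ℰ(f) = supₙ ℰₙ(f) ∈ [0,∞] and 𝒥ₙ(f) = 2ⁿ (4π²)⁻¹ Σ_{i=0}^{2ⁿ−1} (1 − cos(2π(f((i+1)2^{−n}) − f(i2^{−n}))))). Then: (i) for every sequence fₙ ∈ X_q converging uniformly to f ∈ X_q, ℰ(f) ≤ liminfₙ 𝒥ₙ(fₙ); (ii) for every f ∈ X_q there exists fₙ → f uniformly in X_q with limsupₙ 𝒥ₙ(fₙ) ≤ ℰ(f); (iii) if each fₙ minimizes 𝒥ₙ over X_q and fₙ → f* uniformly, then f* minimizes ℰ over X_q and ℰ(f*) = limₙ 𝒥ₙ(fₙ). -/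

import Mathlib

open Filter
open scoped ENNReal

noncomputable section

/-- Discrete Dirichlet energy of `f : [0,1] → ℝ` on the uniform grid of mesh
`2⁻ⁿ` (each edge counted once). -/
def gridEf (n : ℕ) (f : ℝ → ℝ) : ℝ :=
  2 ^ n * ∑ i ∈ Finset.range (2 ^ n),
    (f ((i + 1 : ℕ) / 2 ^ n) - f ((i : ℕ) / 2 ^ n)) ^ 2 / 2

/-- `ℰ(f) = supₙ ℰₙ(f)`, with values in the extended reals. -/
def gridEtot (f : ℝ → ℝ) : ℝ≥0∞ :=
  ⨆ n : ℕ, ENNReal.ofReal (gridEf n f)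

/-- Discrete Kuramoto energy of `f : [0,1] → ℝ` on the uniform grid of mesh
`2⁻ⁿ` (each edge counted once). -/
def gridJf (n : ℕ) (f : ℝ → ℝ) : ℝ :=
  2 ^ n * (1 / (4 * Real.pi ^ 2)) *
    ∑ i ∈ Finset.range (2 ^ n),
      (1 - Real.cos (2 * Real.pi * (f ((i + 1 : ℕ) / 2 ^ n) - f ((i : ℕ) / 2 ^ n))))

/-- Membership in `X_q = {f ∈ C([0,1],ℝ) : f(0) = 0, f(1) = q}`. -/
def MemXq (q : ℤ) (f : ℝ → ℝ) : Prop :=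
  ContinuousOn f (Set.Icc 0 1) ∧ f 0 = 0 ∧ f 1 = (q : ℝ)

/-!
Since `1 - cos (2πd) ≤ 2π²d²`, we have `𝒥ₙ ≤ ℰₙ ≤ ℰ`: constant sequences are recovery sequences,
and a minimizer of `𝒥ₙ` has energy at most `ℰ h` for every competitor `h`. Conversely
`1 - cos (2πd) ≥ (1 - ε) 2π²d²` for small `d`, and the grid increments of `fₙ` become uniformly
small when `fₙ` converges uniformly to a continuous limit. As refining the grid can only increase
`ℰₙ`, this gives `(1 - ε) ℰₘ f ≤ liminf 𝒥ₙ fₙ` for every `m` and `ε`.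
-/

open Real

def gridIncr (n : ℕ) (f : ℝ → ℝ) (i : ℕ) : ℝ :=
  f ((i + 1 : ℕ) / 2 ^ n) - f ((i : ℕ) / 2 ^ n)

lemma gridEf_eq (n : ℕ) (f : ℝ → ℝ) :
    gridEf n f = 2 ^ n * ∑ i ∈ Finset.range (2 ^ n), gridIncr n f i ^ 2 / 2 :=
  rfl

lemma gridJf_eq (n : ℕ) (f : ℝ → ℝ) :
    gridJf n f =
      2 ^ n * ∑ i ∈ Finset.range (2 ^ n), (1 - cos (2 * π * gridIncr n f i)) / (4 * π ^ 2) := by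
  rw [gridJf, mul_assoc, Finset.mul_sum]
  congr 1
  exact Finset.sum_congr rfl fun i _ => by rw [gridIncr]; ring

lemma natCast_div_two_pow_mem_Icc {n j : ℕ} (hj : j ≤ 2 ^ n) :
    (j : ℝ) / 2 ^ n ∈ Set.Icc (0 : ℝ) 1 :=
  ⟨by positivity, (div_le_one (by positivity)).mpr (by exact_mod_cast hj)⟩

lemma one_sub_cos_two_pi_mul_div_le (d : ℝ) : (1 - cos (2 * π * d)) / (4 * π ^ 2) ≤ d ^ 2 / 2 := by
  rw [div_le_iff₀ (by positivity)]
  linarith [one_sub_sq_div_two_le_cos (x := 2 * π * d)]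

lemma one_sub_mul_sq_div_two_le_one_sub_cos {ε x : ℝ} (hx : |x| ≤ min 1 ε) :
    (1 - ε) * (x ^ 2 / 2) ≤ 1 - cos x := by
  have hx1 : |x| ≤ 1 := hx.trans (min_le_left _ _)
  have hxε : |x| ≤ ε := hx.trans (min_le_right _ _)
  -- the quartic error term of `cos_bound` is at most `ε x² / 2` because `x² ≤ |x| ≤ ε`
  have hsq : x ^ 2 ≤ ε := by
    rw [← sq_abs]
    nlinarith [abs_nonneg x]
  have hbound := (abs_le.mp (cos_bound hx1)).2
  have hquartic : |x| ^ 4 = x ^ 2 * x ^ 2 := by rw [← sq_abs x]; ring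
  nlinarith [mul_le_mul_of_nonneg_left hsq (sq_nonneg x)]

lemma one_sub_mul_sq_div_two_le_one_sub_cos_two_pi_mul_div {ε d : ℝ}
    (hd : |d| ≤ min 1 ε / (2 * π)) :
    (1 - ε) * (d ^ 2 / 2) ≤ (1 - cos (2 * π * d)) / (4 * π ^ 2) := by
  have hx : |2 * π * d| ≤ min 1 ε := by
    rw [abs_mul, abs_of_pos two_pi_pos]
    rwa [le_div_iff₀' two_pi_pos] at hd
  rw [le_div_iff₀ (by positivity)]
  linarith [one_sub_mul_sq_div_two_le_one_sub_cos hx]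

lemma Finset.sum_range_two_mul {M : Type*} [AddCommMonoid M] (k : ℕ) (g : ℕ → M) :
    ∑ j ∈ Finset.range (2 * k), g j = ∑ i ∈ Finset.range k, (g (2 * i) + g (2 * i + 1)) := by
  induction k with
  | zero => simp
  | succ k ih =>
    rw [Nat.mul_succ, Finset.sum_range_succ, Finset.sum_range_succ, ih, Finset.sum_range_succ,
      add_assoc]

lemma gridIncr_two_mul_add_gridIncr (n : ℕ) (f : ℝ → ℝ) (i : ℕ) :
    gridIncr (n + 1) f (2 * i) + gridIncr (n + 1) f (2 * i + 1) = gridIncr n f i := by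
  have hcoarse (j : ℕ) : ((2 * j : ℕ) : ℝ) / 2 ^ (n + 1) = (j : ℝ) / 2 ^ n := by
    rw [pow_succ]
    push_cast
    field_simp
  have hsucc : 2 * i + 1 + 1 = 2 * (i + 1) := by ring
  simp only [gridIncr, hsucc, hcoarse]
  ring

lemma gridEf_le_gridEf_succ (n : ℕ) (f : ℝ → ℝ) : gridEf n f ≤ gridEf (n + 1) f := by
  rw [gridEf_eq, gridEf_eq, pow_succ' (2 : ℕ), pow_succ', Finset.sum_range_two_mul, Finset.mul_sum,
    Finset.mul_sum]
  refine Finset.sum_le_sum fun i _ => ?_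
  rw [← gridIncr_two_mul_add_gridIncr n f i]
  -- `(u + v)² ≤ 2 (u² + v²)`: splitting an edge in two can only increase the energy
  nlinarith [sq_nonneg (gridIncr (n + 1) f (2 * i) - gridIncr (n + 1) f (2 * i + 1)),
    pow_pos (two_pos (α := ℝ)) n]

lemma monotone_gridEf (f : ℝ → ℝ) : Monotone fun n => gridEf n f :=
  monotone_nat_of_le_succ fun n => gridEf_le_gridEf_succ n f

lemma gridJf_le_gridEf (n : ℕ) (f : ℝ → ℝ) : gridJf n f ≤ gridEf n f := by
  rw [gridJf_eq, gridEf_eq]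
  gcongr 2 ^ n * ?_
  exact Finset.sum_le_sum fun i _ => one_sub_cos_two_pi_mul_div_le _

lemma one_sub_mul_gridEf_le_gridJf {n : ℕ} {f : ℝ → ℝ} {ε : ℝ}
    (hsmall : ∀ i < 2 ^ n, |gridIncr n f i| ≤ min 1 ε / (2 * π)) :
    (1 - ε) * gridEf n f ≤ gridJf n f := by
  rw [gridJf_eq, gridEf_eq, mul_left_comm, Finset.mul_sum]
  gcongr 2 ^ n * ?_
  refine Finset.sum_le_sum fun i hi => ?_
  exact one_sub_mul_sq_div_two_le_one_sub_cos_two_pi_mul_div (hsmall i (Finset.mem_range.mp hi))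

lemma ofReal_gridJf_le_gridEtot (n : ℕ) (f : ℝ → ℝ) : ENNReal.ofReal (gridJf n f) ≤ gridEtot f :=
  (ENNReal.ofReal_le_ofReal (gridJf_le_gridEf n f)).trans
    (le_iSup (fun n => ENNReal.ofReal (gridEf n f)) n)

lemma tendsto_gridEf_of_tendsto {ι : Type*} {l : Filter ι} {fn : ι → ℝ → ℝ} {f : ℝ → ℝ}
    (h : ∀ x ∈ Set.Icc (0 : ℝ) 1, Tendsto (fun n => fn n x) l (nhds (f x))) (m : ℕ) :
    Tendsto (fun n => gridEf m (fn n)) l (nhds (gridEf m f)) := by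
  simp only [gridEf_eq, gridIncr]
  refine (tendsto_finsetSum _ fun i hi => ?_).const_mul _
  have hi := Finset.mem_range.mp hi
  exact (((h _ (natCast_div_two_pow_mem_Icc hi)).sub
    (h _ (natCast_div_two_pow_mem_Icc hi.le))).pow 2).div_const 2

lemma TendstoUniformlyOn.exists_eventually_dist_lt {α β ι : Type*} [PseudoMetricSpace α]
    [PseudoMetricSpace β] {l : Filter ι} {F : ι → α → β} {f : α → β} {s : Set α}
    (hF : TendstoUniformlyOn F f l s) (hf : UniformContinuousOn f s) {δ : ℝ} (hδ : 0 < δ) :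
    ∃ η > 0, ∀ᶠ n in l, ∀ x ∈ s, ∀ y ∈ s, dist x y < η → dist (F n x) (F n y) < δ := by
  obtain ⟨η, hη, hfη⟩ := Metric.uniformContinuousOn_iff.mp hf (δ / 3) (by positivity)
  refine ⟨η, hη, (Metric.tendstoUniformlyOn_iff.mp hF (δ / 3) (by positivity)).mono
    fun n hn x hx y hy hxy => ?_⟩
  calc dist (F n x) (F n y) ≤ dist (F n x) (f x) + dist (f x) (f y) + dist (f y) (F n y) :=
        dist_triangle4 _ _ _ _
    _ < δ / 3 + δ / 3 + δ / 3 := by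
        gcongr
        · exact dist_comm (F n x) (f x) ▸ hn x hx
        · exact hfη x hx y hy hxy
        · exact hn y hy
    _ = δ := by ring

lemma eventually_abs_gridIncr_lt {fn : ℕ → ℝ → ℝ} {f : ℝ → ℝ}
    (hf : ContinuousOn f (Set.Icc 0 1)) (hu : TendstoUniformlyOn fn f atTop (Set.Icc 0 1))
    {δ : ℝ} (hδ : 0 < δ) :
    ∀ᶠ n in atTop, ∀ i < 2 ^ n, |gridIncr n (fn n) i| < δ := by
  obtain ⟨η, hη, hequi⟩ :=
    hu.exists_eventually_dist_lt (isCompact_Icc.uniformContinuousOn_of_continuous hf) hδ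
  have hmesh : ∀ᶠ n : ℕ in atTop, (2⁻¹ : ℝ) ^ n < η :=
    (tendsto_pow_atTop_nhds_zero_of_lt_one (by norm_num) (by norm_num)).eventually
      (gt_mem_nhds hη)
  filter_upwards [hequi, hmesh] with n hn hnη i hi
  have hdist : dist (((i + 1 : ℕ) : ℝ) / 2 ^ n) ((i : ℝ) / 2 ^ n) = (2⁻¹ : ℝ) ^ n := by
    rw [Real.dist_eq, inv_pow, ← sub_div, Nat.cast_succ, add_sub_cancel_left, abs_of_pos
      (by positivity), one_div]
  exact hn _ (natCast_div_two_pow_mem_Icc hi) _ (natCast_div_two_pow_mem_Icc hi.le) (hdist ▸ hnη)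

lemma ofReal_le_of_forall_one_sub_mul_le {a : ℝ} {L : ℝ≥0∞}
    (h : ∀ ε : ℝ, 0 < ε → ε < 1 → ENNReal.ofReal ((1 - ε) * a) ≤ L) : ENNReal.ofReal a ≤ L := by
  have hlim : Tendsto (fun ε : ℝ => ENNReal.ofReal ((1 - ε) * a)) (nhdsWithin 0 (Set.Ioi 0))
      (nhds (ENNReal.ofReal a)) := by
    have : Tendsto (fun ε : ℝ => (1 - ε) * a) (nhds 0) (nhds ((1 - 0) * a)) :=
      (tendsto_const_nhds.sub tendsto_id).mul_const a
    simpa using ENNReal.tendsto_ofReal (this.mono_left nhdsWithin_le_nhds)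
  exact le_of_tendsto hlim
    (eventually_of_mem (Ioo_mem_nhdsGT one_pos) fun ε hε => h ε hε.1 hε.2)

lemma ofReal_one_sub_mul_gridEf_le_liminf_gridJf {fn : ℕ → ℝ → ℝ} {f : ℝ → ℝ}
    (hf : ContinuousOn f (Set.Icc 0 1)) (hu : TendstoUniformlyOn fn f atTop (Set.Icc 0 1))
    (m : ℕ) {ε : ℝ} (hε : 0 < ε) (hε1 : ε < 1) :
    ENNReal.ofReal ((1 - ε) * gridEf m f) ≤
      liminf (fun n => ENNReal.ofReal (gridJf n (fn n))) atTop := by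
  have hlim : Tendsto (fun n => ENNReal.ofReal ((1 - ε) * gridEf m (fn n))) atTop
      (nhds (ENNReal.ofReal ((1 - ε) * gridEf m f))) :=
    ENNReal.tendsto_ofReal
      ((tendsto_gridEf_of_tendsto (fun x hx => hu.tendsto_at hx) m).const_mul _)
  rw [← hlim.liminf_eq]
  refine liminf_le_liminf ?_
  filter_upwards [eventually_abs_gridIncr_lt hf hu (δ := min 1 ε / (2 * π)) (by positivity),
    eventually_ge_atTop m] with n hsmall hmn
  gcongr ENNReal.ofReal ?_
  calc (1 - ε) * gridEf m (fn n) ≤ (1 - ε) * gridEf n (fn n) :=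
        mul_le_mul_of_nonneg_left (monotone_gridEf _ hmn) (by linarith)
    _ ≤ gridJf n (fn n) := one_sub_mul_gridEf_le_gridJf fun i hi => (hsmall i hi).le

lemma gridEtot_le_liminf_gridJf {fn : ℕ → ℝ → ℝ} {f : ℝ → ℝ}
    (hf : ContinuousOn f (Set.Icc 0 1)) (hu : TendstoUniformlyOn fn f atTop (Set.Icc 0 1)) :
    gridEtot f ≤ liminf (fun n => ENNReal.ofReal (gridJf n (fn n))) atTop :=
  iSup_le fun m => ofReal_le_of_forall_one_sub_mul_le fun _ hε hε1 =>
    ofReal_one_sub_mul_gridEf_le_liminf_gridJf hf hu m hε hε1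

/-- Theorem 4.1: `Γ`-convergence on the fundamental domain of
the circle. (i) liminf inequality, (ii) recovery sequences, (iii) convergence
of minimizers. -/
theorem statement16 (q : ℤ) :
    (∀ (fn : ℕ → ℝ → ℝ) (f : ℝ → ℝ),
      (∀ n, MemXq q (fn n)) → MemXq q f →
      TendstoUniformlyOn fn f atTop (Set.Icc 0 1) →
      gridEtot f ≤ liminf (fun n => ENNReal.ofReal (gridJf n (fn n))) atTop) ∧
    (∀ f : ℝ → ℝ, MemXq q f →
      ∃ fn : ℕ → ℝ → ℝ, (∀ n, MemXq q (fn n)) ∧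
        TendstoUniformlyOn fn f atTop (Set.Icc 0 1) ∧
        limsup (fun n => ENNReal.ofReal (gridJf n (fn n))) atTop ≤ gridEtot f) ∧
    (∀ (fn : ℕ → ℝ → ℝ) (fstar : ℝ → ℝ),
      (∀ n, MemXq q (fn n)) →
      (∀ n, ∀ h : ℝ → ℝ, MemXq q h → gridJf n (fn n) ≤ gridJf n h) →
      MemXq q fstar →
      TendstoUniformlyOn fn fstar atTop (Set.Icc 0 1) →
      (∀ h : ℝ → ℝ, MemXq q h → gridEtot fstar ≤ gridEtot h) ∧
      Tendsto (fun n => ENNReal.ofReal (gridJf n (fn n))) atTop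
        (nhds (gridEtot fstar))) := by
  refine ⟨fun fn f _ hf hu => gridEtot_le_liminf_gridJf hf.1 hu, fun f hf => ?_, ?_⟩
  · refine ⟨fun _ => f, fun _ => hf, fun u hu => .of_forall fun _ _ _ => refl_mem_uniformity hu,
      limsup_le_of_le (h := .of_forall fun n => ofReal_gridJf_le_gridEtot n f)⟩
  · intro fn fstar _ hmin hfstar hu
    have hlower := gridEtot_le_liminf_gridJf hfstar.1 hu
    have hupper (h : ℝ → ℝ) (hh : MemXq q h) :
        limsup (fun n => ENNReal.ofReal (gridJf n (fn n))) atTop ≤ gridEtot h :=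
      limsup_le_of_le (h := .of_forall fun n =>
        (ENNReal.ofReal_le_ofReal (hmin n h hh)).trans (ofReal_gridJf_le_gridEtot n h))
    exact ⟨fun h hh => le_trans hlower (le_trans liminf_le_limsup (hupper h hh)),
      tendsto_of_le_liminf_of_limsup_le hlower (hupper fstar hfstar)⟩

end
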